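/- Let (B, L, θ) be a Boolean dynamical system and (α, A) a cycle with no exits. Then there exist 1 ≤ j ≤ |α| and a non-empty B ⊆ A such that, with β = α₁⋯α_j, the pair (β, B) is a cycle with no exits and B ∩ θ_{β₁⋯β_k}(B) = ∅ for all 1 ≤ k < j. -/

import Mathlib

/-- An ideal of a (generalized) Boolean algebra: a non-empty subset closed under
union and under intersection with arbitrary elements. -/
def IsBoolIdeal {B : Type*} [GeneralizedBooleanAlgebra B] (I : Set B) : Prop :=
  I.Nonempty ∧ (∀ a ∈ I, ∀ b ∈ I, a ⊔ b ∈ I) ∧ (∀ a ∈ I, ∀ b : B, a ⊓ b ∈ I)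

/-- A filter in a (generalized) Boolean algebra. -/
def IsBoolFilter {B : Type*} [GeneralizedBooleanAlgebra B] (ξ : Set B) : Prop :=
  ξ.Nonempty ∧ ⊥ ∉ ξ ∧ (∀ a ∈ ξ, ∀ b : B, a ≤ b → b ∈ ξ) ∧ (∀ a ∈ ξ, ∀ b ∈ ξ, a ⊓ b ∈ ξ)

/-- An ultrafilter of a (generalized) Boolean algebra. -/
def IsBoolUltrafilter {B : Type*} [GeneralizedBooleanAlgebra B] (ξ : Set B) : Prop :=
  IsBoolFilter ξ ∧ ∀ a ∈ ξ, ∀ b b' : B, a = b ⊔ b' → b ∈ ξ ∨ b' ∈ ξ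

/-- The relation `A ~ B ⟺ A ∪ A' = B ∪ B'` for some `A', B' ∈ I`. -/
def relI {B : Type*} [GeneralizedBooleanAlgebra B] (I : Set B) (a b : B) : Prop :=
  ∃ a' ∈ I, ∃ b' ∈ I, a ⊔ a' = b ⊔ b'

/-- The action of a finite word `α ∈ L*`: `θ_α = θ_{α_n} ∘ ⋯ ∘ θ_{α_1}`. -/
def wordAct {B L : Type*} (θ : L → B → B) (α : List L) (A : B) : B :=
  α.foldl (fun x a => θ a x) A

/-- `α^k`: the word `α` concatenated with itself `k` times. -/
def wordPow {L : Type*} (α : List L) (k : ℕ) : List L := (List.replicate k α).flatten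

/-- A Boolean dynamical system: a Boolean algebra `B`, a set `L`, and actions
`θ_a` on `B` (Boolean homomorphisms with `θ_a ⊥ = ⊥`) such that each word
action has compact range and closed domain. -/
structure BoolDynSys (B L : Type*) [GeneralizedBooleanAlgebra B] where
  θ : L → B → B
  map_inf : ∀ (a : L) (A A' : B), θ a (A ⊓ A') = θ a A ⊓ θ a A'
  map_sup : ∀ (a : L) (A A' : B), θ a (A ⊔ A') = θ a A ⊔ θ a A'
  map_sdiff : ∀ (a : L) (A A' : B), θ a (A \ A') = θ a A \ θ a A'
  map_bot : ∀ a : L, θ a ⊥ = ⊥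
  compactRange : ∀ α : List L, α ≠ [] → ∃ R : B, IsLUB (Set.range (wordAct θ α)) R
  closedDomain : ∀ α : List L, α ≠ [] → ∀ R : B, IsLUB (Set.range (wordAct θ α)) R →
      ∃ D : B, wordAct θ α D = R

section BDS
variable {B L : Type*} [GeneralizedBooleanAlgebra B]

/-- `Δ_A = {a ∈ L : θ_a(A) ≠ ∅}`. -/
def DeltaSet (S : BoolDynSys B L) (A : B) : Set L := {a : L | S.θ a A ≠ ⊥}

/-- `A` is regular if every non-empty `C ⊆ A` has `0 < |Δ_C| < ∞`. -/
def RegularElt (S : BoolDynSys B L) (A : B) : Prop :=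
  ∀ C : B, C ≤ A → C ≠ ⊥ → (DeltaSet S C).Finite ∧ (DeltaSet S C).Nonempty

/-- An ultrafilter cycle `(α, η)`: `θ_α(A) ∈ η` for all `A ∈ η`. -/
def IsUFCycle (S : BoolDynSys B L) (α : List L) (η : Set B) : Prop :=
  α ≠ [] ∧ IsBoolUltrafilter η ∧ ∀ A ∈ η, wordAct S.θ α A ∈ η

/-- A cycle `(α, A)`: `θ_α(C) = C` for all `C ⊆ A`. -/
def IsCycle (S : BoolDynSys B L) (α : List L) (A : B) : Prop :=
  α ≠ [] ∧ A ≠ ⊥ ∧ ∀ C : B, C ≤ A → wordAct S.θ α C = C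

/-- The cycle `(α, A)` has no exits: for all `t ≤ |α|` and all non-empty
`C ⊆ θ_{α₁⋯α_t}(A)`, `C` is regular with `Δ_C = {α_{t+1}}` (indices mod `|α|`). -/
def NoExits (S : BoolDynSys B L) (α : List L) (A : B) : Prop :=
  ∀ t : ℕ, ∀ _h1 : 1 ≤ t, ∀ h2 : t ≤ α.length, ∀ C : B, C ≠ ⊥ →
    C ≤ wordAct S.θ (α.take t) A →
    RegularElt S C ∧
      DeltaSet S C = {α.get ⟨t % α.length, Nat.mod_lt t (Nat.lt_of_lt_of_le _h1 h2)⟩}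

/-- The cycle `(α, A)` has an exit. -/
def HasExit (S : BoolDynSys B L) (α : List L) (A : B) : Prop :=
  ∃ t : ℕ, ∃ _h1 : 1 ≤ t, ∃ h2 : t ≤ α.length, ∃ C : B, C ≠ ⊥ ∧
    C ≤ wordAct S.θ (α.take t) A ∧
    DeltaSet S C ≠ {α.get ⟨t % α.length, Nat.mod_lt t (Nat.lt_of_lt_of_le _h1 h2)⟩}

/-- Condition (L): every cycle has an exit. -/
def ConditionL (S : BoolDynSys B L) : Prop :=
  ∀ (α : List L) (A : B), IsCycle S α A → HasExit S α A

/-- A hereditary subset: closed under the actions. -/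
def IsHereditary (S : BoolDynSys B L) (H : Set B) : Prop :=
  ∀ A ∈ H, ∀ a : L, S.θ a A ∈ H

/-- A saturated subset: `A ∈ H` whenever `A` is regular and `θ_a(A) ∈ H` for all `a`. -/
def IsSaturated (S : BoolDynSys B L) (H : Set B) : Prop :=
  ∀ A : B, RegularElt S A → (∀ a : L, S.θ a A ∈ H) → A ∈ H

/-- A maximal tail: conditions (T0)–(T5). -/
def IsMaximalTail (S : BoolDynSys B L) (T : Set B) : Prop :=
  T.Nonempty ∧
  (⊥ ∉ T) ∧
  (∀ A : B, ∀ a : L, S.θ a A ∈ T → A ∈ T) ∧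
  (∀ A C : B, A ⊔ C ∈ T → A ∈ T ∨ C ∈ T) ∧
  (∀ A ∈ T, ∀ C : B, A ≤ C → C ∈ T) ∧
  (∀ A ∈ T, RegularElt S A → ∃ a : L, S.θ a A ∈ T) ∧
  (∀ A₁ ∈ T, ∀ A₂ ∈ T, ∃ C ∈ T,
      (∃ α : List L, C ≤ wordAct S.θ α A₁) ∧ (∃ β : List L, C ≤ wordAct S.θ β A₂))

/-- A cyclic maximal tail. -/
def IsCyclicMaximalTail (S : BoolDynSys B L) (T : Set B) : Prop :=
  IsMaximalTail S T ∧
  ∃ (α : List L) (η : Set B) (A : B), IsUFCycle S α η ∧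
    T = {C : B | ∃ β : List L, wordAct S.θ β C ∈ η} ∧ A ∈ η ∧
    ∀ β : List L, β ≠ [] → ∀ C : B, C ≤ A → wordAct S.θ β C ∈ η →
      C ∈ η ∧ ∃ k : ℕ, 0 < k ∧ β = wordPow α k

/-- Condition (K). -/
def ConditionK (S : BoolDynSys B L) : Prop :=
  ¬ ∃ (α : List L) (η : Set B) (A : B), IsUFCycle S α η ∧ A ∈ η ∧
    ∀ β : List L, β ≠ [] → ∀ C : B, C ≤ A → wordAct S.θ β C ∈ η →
      C ∈ η ∧ ∃ k : ℕ, 0 < k ∧ β = wordPow α k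

/-! Notions for the quotient Boolean dynamical system `(B/H, L, θ)` (for a
hereditary saturated ideal `H`), expressed in terms of representatives in `B`. -/

/-- `[C] ⊆ [B']` in `B/H`. -/
def qle (H : Set B) (C A : B) : Prop := ∃ W ∈ H, C ≤ A ⊔ W

/-- `Δ_{[C]}` in `B/H`. -/
def QDelta (S : BoolDynSys B L) (H : Set B) (C : B) : Set L := {a : L | S.θ a C ∉ H}

/-- `[A]` is regular in `B/H`. -/
def QRegular (S : BoolDynSys B L) (H : Set B) (A : B) : Prop :=
  ∀ C : B, C ∉ H → qle H C A → (QDelta S H C).Finite ∧ (QDelta S H C).Nonempty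

/-- `(α, [A])` is a cycle in the quotient `(B/H, L, θ)`. -/
def QCycle (S : BoolDynSys B L) (H : Set B) (α : List L) (A : B) : Prop :=
  α ≠ [] ∧ A ∉ H ∧ ∀ C : B, qle H C A → relI H (wordAct S.θ α C) C

/-- The cycle `(α, [A])` has an exit in the quotient `(B/H, L, θ)`. -/
def QHasExit (S : BoolDynSys B L) (H : Set B) (α : List L) (A : B) : Prop :=
  ∃ t : ℕ, ∃ _h1 : 1 ≤ t, ∃ h2 : t ≤ α.length, ∃ C : B, C ∉ H ∧
    qle H C (wordAct S.θ (α.take t) A) ∧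
    QDelta S H C ≠ {α.get ⟨t % α.length, Nat.mod_lt t (Nat.lt_of_lt_of_le _h1 h2)⟩}

/-- The quotient `(B/H, L, θ)` satisfies Condition (L). -/
def QConditionL (S : BoolDynSys B L) (H : Set B) : Prop :=
  ∀ (α : List L) (A : B), QCycle S H α A → QHasExit S H α A

end BDS

/-! Along a cycle `(α, A)` without exits, a non-empty piece of `θ_{α₁⋯α_t}(A)` can only move on
by the letter `α_{t+1}`, so the infinite periodic word `f = ααα⋯` is the only path out of `A`;
in particular, if `A` meets `θ_{f₁⋯f_k}(A)` then `f` is `k`-periodic.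

Let `j` be least such that `θ_{f₁⋯f_j}` is the identity below some non-empty `U ≤ A`; then `f`
is `j`-periodic. For `0 < k < j`, if `τ = θ_{f₁⋯f_k}` moved no non-empty `W ≤ U` off itself, `f`
would be `k`-periodic, so `τ^j = θ_{f₁⋯f_{jk}}` would be the identity below `W`. For a monotone
`τ` on a Boolean algebra that forces `τ` itself to be the identity below `W` (a `Y ≤ W` with
`Y ≰ τ Y` would give `Y \ τ Y` disjoint from its image, and otherwise
`Y ≤ τ Y ≤ τ^j Y = Y`), contradicting the minimality of `j`. So below every non-empty `W ≤ U`
some non-empty `Y` has `Y ⊓ τ Y = ⊥`, and shrinking `U` once for each `k < j` gives `C`. -/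

open Function

section Shrinking
variable {P ι : Type*} [Preorder P] [Bot P]

theorem exists_le_forall_of_dense {p : ι → P → Prop} (s : Finset ι) {U : P} (hU : U ≠ ⊥)
    (hp : ∀ i ∈ s, ∀ ⦃Y Z : P⦄, Z ≤ Y → p i Y → p i Z)
    (hdense : ∀ i ∈ s, ∀ W ≤ U, W ≠ ⊥ → ∃ Y ≤ W, Y ≠ ⊥ ∧ p i Y) :
    ∃ V ≤ U, V ≠ ⊥ ∧ ∀ i ∈ s, p i V := by
  classical
  induction s using Finset.induction_on with
  | empty => exact ⟨U, le_rfl, hU, by simp⟩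
  | insert i s hi ih =>
    obtain ⟨V, hVU, hV, hVs⟩ := ih (fun j hj => hp j (Finset.mem_insert_of_mem hj))
      (fun j hj => hdense j (Finset.mem_insert_of_mem hj))
    obtain ⟨Y, hYV, hY, hYi⟩ := hdense i (Finset.mem_insert_self i s) V hVU hV
    refine ⟨Y, hYV.trans hVU, hY, (Finset.forall_mem_insert _ _ _).mpr
      ⟨hYi, fun j hj => hp j (Finset.mem_insert_of_mem hj) hYV (hVs j hj)⟩⟩

end Shrinking

theorem forall_map_eq_of_inf_ne_bot {B : Type*} [GeneralizedBooleanAlgebra B] {σ : B → B}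
    (hσ : Monotone σ) {N : ℕ} (hN : 0 < N) {W : B} (hfix : ∀ Y ≤ W, σ^[N] Y = Y)
    (h : ∀ Y ≤ W, Y ≠ ⊥ → Y ⊓ σ Y ≠ ⊥) : ∀ Y ≤ W, σ Y = Y := by
  intro Y hY
  have hle : Y ≤ σ Y := by
    by_contra hY'
    refine h (Y \ σ Y) (sdiff_le.trans hY) (fun h0 => hY' (sdiff_eq_bot_iff.mp h0)) ?_
    exact le_bot_iff.mp ((inf_le_inf_left _ (hσ sdiff_le)).trans disjoint_sdiff_self_left.le_bot)
  refine le_antisymm ?_ hle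
  calc σ Y = σ^[1] Y := rfl
    _ ≤ σ^[N] Y := hσ.monotone_iterate_of_le_map hle hN
    _ = Y := hfix Y hY

section Words
variable {B L : Type*}

theorem wordAct_append (θ : L → B → B) (u v : List L) (X : B) :
    wordAct θ (u ++ v) X = wordAct θ v (wordAct θ u X) :=
  List.foldl_append

def prefixWord (f : ℕ → L) (t : ℕ) : List L := (List.range t).map f

theorem prefixWord_add_of_periodic {f : ℕ → L} {a : ℕ} (hf : Periodic f a) (b : ℕ) :
    prefixWord f (a + b) = prefixWord f a ++ prefixWord f b := by
  simp only [prefixWord, List.range_add, List.map_append, List.map_map]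
  congr 1
  exact List.map_congr_left fun x _ => by simpa [add_comm] using hf x

theorem wordAct_prefixWord_mul {f : ℕ → L} {d : ℕ} (hf : Periodic f d) (θ : L → B → B)
    (m : ℕ) (X : B) : wordAct θ (prefixWord f (m * d)) X = (wordAct θ (prefixWord f d))^[m] X := by
  induction m with
  | zero => simp [prefixWord, wordAct]
  | succ m ih =>
    rw [Nat.succ_mul, prefixWord_add_of_periodic (by simpa using hf.nat_mul m), wordAct_append,
      ih, iterate_succ_apply']

theorem wordAct_prefixWord_mod {f : ℕ → L} {n : ℕ} (hf : Periodic f n) {θ : L → B → B} {A : B}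
    (hA : wordAct θ (prefixWord f n) A = A) (s : ℕ) :
    wordAct θ (prefixWord f s) A = wordAct θ (prefixWord f (s % n)) A := by
  conv_lhs => rw [← Nat.div_add_mod' s n]
  rw [prefixWord_add_of_periodic (by simpa using hf.nat_mul (s / n)), wordAct_append,
    wordAct_prefixWord_mul hf, iterate_fixed hA]

def cyclicLetter (α : List L) (hα : α ≠ []) (s : ℕ) : L :=
  α.get ⟨s % α.length, Nat.mod_lt s (List.length_pos_iff.mpr hα)⟩

theorem periodic_cyclicLetter (α : List L) (hα : α ≠ []) :
    Periodic (cyclicLetter α hα) α.length := fun s => by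
  simp [cyclicLetter]

theorem take_eq_prefixWord_cyclicLetter {α : List L} (hα : α ≠ []) {t : ℕ} (ht : t ≤ α.length) :
    α.take t = prefixWord (cyclicLetter α hα) t := by
  apply List.ext_getElem
  · simp [prefixWord, ht]
  · intro i h1 h2
    have hi : i < α.length := by simp at h1; omega
    simp [prefixWord, cyclicLetter, Nat.mod_eq_of_lt hi]

end Words

namespace BoolDynSys
variable {B L : Type*} [GeneralizedBooleanAlgebra B] (S : BoolDynSys B L)

theorem monotone_θ (a : L) : Monotone (S.θ a) :=
  Monotone.of_map_sup (S.map_sup a)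

theorem monotone_wordAct (w : List L) : Monotone (wordAct S.θ w) := by
  induction w with
  | nil => exact monotone_id
  | cons a w ih => exact ih.comp (S.monotone_θ a)

theorem periodic_of_inf_wordAct_ne_bot {f : ℕ → L} {A : B}
    (hΔ : ∀ s X, X ≠ ⊥ → X ≤ wordAct S.θ (prefixWord f s) A → DeltaSet S X = {f s}) {k : ℕ}
    (hk : A ⊓ wordAct S.θ (prefixWord f k) A ≠ ⊥) : Periodic f k := by
  set E := fun s => wordAct S.θ (prefixWord f s) A
  have hE : ∀ s, E (s + 1) = S.θ (f s) (E s) := fun s => by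
    simp [E, prefixWord, List.range_succ, wordAct]
  have hcommon : ∀ s, ∃ X ≠ ⊥, X ≤ E s ∧ X ≤ E (s + k) := by
    intro s
    induction s with
    | zero => exact ⟨_, hk, inf_le_left, by simp [E]⟩
    | succ s ih =>
      obtain ⟨X, hX, hXs, hXsk⟩ := ih
      have hfs := hΔ s X hX hXs
      have hfsk : f (s + k) = f s :=
        Set.singleton_eq_singleton_iff.mp ((hΔ (s + k) X hX hXsk).symm.trans hfs)
      refine ⟨S.θ (f s) X, ?_, ?_, ?_⟩
      · change f s ∈ DeltaSet S X
        rw [hfs]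
        rfl
      · rw [hE]
        exact S.monotone_θ _ hXs
      · rw [add_right_comm, hE, hfsk]
        exact S.monotone_θ _ hXsk
  intro s
  obtain ⟨X, hX, hXs, hXsk⟩ := hcommon s
  exact Set.singleton_eq_singleton_iff.mp ((hΔ _ X hX hXsk).symm.trans (hΔ s X hX hXs))

end BoolDynSys

namespace NoExits
variable {B L : Type*} [GeneralizedBooleanAlgebra B] {S : BoolDynSys B L} {α : List L} {A : B}

theorem along_orbit (hc : IsCycle S α A) (hne : NoExits S α A) (s : ℕ) {X : B} (hX : X ≠ ⊥)
    (hXs : X ≤ wordAct S.θ (prefixWord (cyclicLetter α hc.1) s) A) :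
    RegularElt S X ∧ DeltaSet S X = {cyclicLetter α hc.1 s} := by
  have hn : 0 < α.length := List.length_pos_iff.mpr hc.1
  have hαA : wordAct S.θ α A = A := hc.2.2 A le_rfl
  have hperiod : wordAct S.θ (prefixWord (cyclicLetter α hc.1) α.length) A = A := by
    rwa [← take_eq_prefixWord_cyclicLetter hc.1 le_rfl, List.take_length]
  rw [wordAct_prefixWord_mod (periodic_cyclicLetter α hc.1) hperiod] at hXs
  obtain ⟨t, ht1, htn, hts, hXt⟩ : ∃ t, 1 ≤ t ∧ t ≤ α.length ∧ t % α.length = s % α.length ∧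
      X ≤ wordAct S.θ (α.take t) A := by
    rcases Nat.eq_zero_or_pos (s % α.length) with h0 | hpos
    · refine ⟨α.length, hn, le_rfl, by rw [Nat.mod_self, h0], ?_⟩
      rw [List.take_length, hαA]
      simpa [h0, prefixWord, wordAct] using hXs
    · refine ⟨s % α.length, hpos, (Nat.mod_lt s hn).le, Nat.mod_mod _ _, ?_⟩
      rwa [take_eq_prefixWord_cyclicLetter hc.1 (Nat.mod_lt s hn).le]
  obtain ⟨hreg, hΔ⟩ := hne t ht1 htn X hX hXt
  refine ⟨hreg, hΔ.trans ?_⟩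
  rw [Set.singleton_eq_singleton_iff]
  exact congrArg α.get (Fin.ext hts)

theorem take_of_periodic (hc : IsCycle S α A) (hne : NoExits S α A) {j : ℕ} (hj : j ≤ α.length)
    (hjper : Periodic (cyclicLetter α hc.1) j) {U : B} (hUA : U ≤ A) :
    NoExits S (α.take j) U := by
  intro t ht1 htj X hX hXt
  have htj' : t ≤ j := by simp at htj; omega
  rw [List.take_take, min_eq_left htj', take_eq_prefixWord_cyclicLetter hc.1 (htj'.trans hj)]
    at hXt
  refine (hne.along_orbit hc t hX (hXt.trans (S.monotone_wordAct _ hUA))).imp_right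
    fun h => h.trans ?_
  rw [Set.singleton_eq_singleton_iff, ← hjper.map_mod_nat]
  have hj' : t % j < α.length := (Nat.mod_lt t (by omega)).trans_le hj
  simp [cyclicLetter, Nat.mod_eq_of_lt hj', hj]

theorem periodic_of_inf_ne_bot (hc : IsCycle S α A) (hne : NoExits S α A) {k : ℕ} {W : B}
    (hWA : W ≤ A) (hk : W ⊓ wordAct S.θ (prefixWord (cyclicLetter α hc.1) k) W ≠ ⊥) :
    Periodic (cyclicLetter α hc.1) k :=
  S.periodic_of_inf_wordAct_ne_bot (fun s _ hX hXs => (hne.along_orbit hc s hX hXs).2)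
    (ne_bot_of_le_ne_bot hk (inf_le_inf hWA (S.monotone_wordAct _ hWA)))

theorem forall_wordAct_eq_of_inf_ne_bot (hc : IsCycle S α A) (hne : NoExits S α A) {j k : ℕ}
    (hj : 0 < j) {W : B} (hWA : W ≤ A) (hW : W ≠ ⊥)
    (hWj : ∀ X ≤ W, wordAct S.θ (prefixWord (cyclicLetter α hc.1) j) X = X)
    (h : ∀ Y ≤ W, Y ≠ ⊥ → Y ⊓ wordAct S.θ (prefixWord (cyclicLetter α hc.1) k) Y ≠ ⊥) :
    ∀ X ≤ W, wordAct S.θ (prefixWord (cyclicLetter α hc.1) k) X = X := by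
  have hjper := hne.periodic_of_inf_ne_bot hc hWA (by rwa [hWj W le_rfl, inf_idem])
  have hkper := hne.periodic_of_inf_ne_bot hc hWA (h W le_rfl hW)
  refine forall_map_eq_of_inf_ne_bot (S.monotone_wordAct _) hj (fun Y hY => ?_) h
  rw [← wordAct_prefixWord_mul hkper, mul_comm, wordAct_prefixWord_mul hjper]
  exact iterate_fixed (hWj Y hY) k

end NoExits

/-- Let `(α, A)` be a cycle with no exits. Then there exist `1 ≤ j ≤ |α|` and a
non-empty `C ⊆ A` such that, with `β = α₁⋯α_j`, the pair `(β, C)` is a cycle with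
no exits and `C ⊓ θ_{β₁⋯β_k}(C) = ∅` for all `1 ≤ k < j`. -/
theorem no_intersection {B L : Type*} [GeneralizedBooleanAlgebra B]
    (S : BoolDynSys B L) (α : List L) (A : B)
    (hc : IsCycle S α A) (hne : NoExits S α A) :
    ∃ j : ℕ, 1 ≤ j ∧ j ≤ α.length ∧ ∃ C : B, C ≠ ⊥ ∧ C ≤ A ∧
      IsCycle S (α.take j) C ∧ NoExits S (α.take j) C ∧
      ∀ k : ℕ, 1 ≤ k → k < j → C ⊓ wordAct S.θ ((α.take j).take k) C = ⊥ := by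
  classical
  set f := cyclicLetter α hc.1
  have hAfix : ∀ X ≤ A, wordAct S.θ (prefixWord f α.length) X = X := fun X hX => by
    rw [← take_eq_prefixWord_cyclicLetter hc.1 le_rfl, List.take_length]
    exact hc.2.2 X hX
  have hcycles : ∃ j, 0 < j ∧ ∃ U ≤ A, U ≠ ⊥ ∧ ∀ X ≤ U, wordAct S.θ (prefixWord f j) X = X :=
    ⟨α.length, List.length_pos_iff.mpr hc.1, A, le_rfl, hc.2.1, hAfix⟩
  obtain ⟨hj, U, hUA, hU, hUj⟩ := Nat.find_spec hcycles
  set j := Nat.find hcycles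
  have hjn : j ≤ α.length :=
    Nat.find_min' hcycles ⟨List.length_pos_iff.mpr hc.1, A, le_rfl, hc.2.1, hAfix⟩
  have hjper : Periodic f j := hne.periodic_of_inf_ne_bot hc hUA (by rwa [hUj U le_rfl, inf_idem])
  obtain ⟨C, hCU, hC, hCdisj⟩ := exists_le_forall_of_dense (Finset.Ioo 0 j) hU
    (p := fun k Y => Y ⊓ wordAct S.θ (prefixWord f k) Y = ⊥)
    (fun k _ Y Z hZY hY => le_bot_iff.mp (hY ▸ inf_le_inf hZY (S.monotone_wordAct _ hZY)))
    (fun k hk W hWU hW => by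
      by_contra! h
      obtain ⟨hk0, hkj⟩ := Finset.mem_Ioo.mp hk
      exact Nat.find_min hcycles hkj ⟨hk0, W, hWU.trans hUA, hW,
        hne.forall_wordAct_eq_of_inf_ne_bot hc hj (hWU.trans hUA) hW
          (fun X hX => hUj X (hX.trans hWU)) h⟩)
  have htake : α.take j = prefixWord f j := take_eq_prefixWord_cyclicLetter hc.1 hjn
  refine ⟨j, hj, hjn, C, hC, hCU.trans hUA, ⟨?_, hC, ?_⟩,
    hne.take_of_periodic hc hjn hjper (hCU.trans hUA), fun k hk hkj => ?_⟩
  · exact List.ne_nil_of_length_pos (by simpa [hjn] using hj)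
  · rw [htake]
    exact fun X hX => hUj X (hX.trans hCU)
  · rw [List.take_take, min_eq_left hkj.le,
      take_eq_prefixWord_cyclicLetter hc.1 (hkj.le.trans hjn)]
    exact hCdisj k (Finset.mem_Ioo.mpr ⟨hk, hkj⟩)
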